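/- Let p ∈ (1, ∞) and, for a ≥ 0, let φ_a(t) = ∫_0^t (a + s)^{p−2} s ds, so that φ_a'(t) = (a + t)^{p−2} t. For every real δ > 0 there exists a constant c(δ) > 0, depending only on p and δ, such that for all a ≥ 0 and all s, t ≥ 0: φ_a'(s) t + φ_a'(t) s ≤ δ φ_a(s) + c(δ) φ_a(t). -/

import Mathlib

/-!
`φ_a'` is nondecreasing and scales like
`θ ^ max (p - 1) 1 * φ_a'(s) ≤ φ_a'(θ s) ≤ θ ^ min (p - 1) 1 * φ_a'(s)` for `θ ∈ [0, 1]`;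
integrating over `[t/2, t]` then gives `t φ_a'(t) ≤ K φ_a(t)`. Fix a small `θ`. If `t ≤ θ s`, both
terms on the left are at most `θ ^ min (p - 1) 1 * s φ_a'(s) ≤ θ ^ min (p - 1) 1 * K φ_a(s)`,
which is below `δ φ_a(s)`. If `θ s ≤ t`, then `θ ^ max (p - 1) 1 * φ_a'(s) ≤ φ_a'(θ s) ≤ φ_a'(t)`
and `s ≤ t / θ`, so both terms are at most `θ ^ (-max (p - 1) 1) * t φ_a'(t)`.
-/

/-- The shifted N-function `φ_a(t) = ∫₀ᵗ (a + s)^{p-2} s ds`. -/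
noncomputable def phiShift (p a t : ℝ) : ℝ :=
  ∫ s in (0:ℝ)..t, (a + s) ^ (p - 2) * s

open Set

theorem MonotoneOn.sub_mul_le_intervalIntegral {g : ℝ → ℝ} {a b c : ℝ} (hg : MonotoneOn g (Icc a b))
    (hac : a ≤ c) (hcb : c ≤ b) (hga : 0 ≤ g a) : (b - c) * g c ≤ ∫ x in a..b, g x := by
  have hint₁ : IntervalIntegrable g MeasureTheory.volume a c :=
    (hg.mono (by rw [uIcc_of_le hac]; exact Icc_subset_Icc le_rfl hcb)).intervalIntegrable
  have hint₂ : IntervalIntegrable g MeasureTheory.volume c b :=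
    (hg.mono (by rw [uIcc_of_le hcb]; exact Icc_subset_Icc hac le_rfl)).intervalIntegrable
  have hleft : 0 ≤ ∫ x in a..c, g x :=
    intervalIntegral.integral_nonneg hac fun x hx =>
      hga.trans (hg (left_mem_Icc.mpr (hac.trans hcb)) ⟨hx.1, hx.2.trans hcb⟩ hx.1)
  have hright : ∫ x in c..b, g c ≤ ∫ x in c..b, g x :=
    intervalIntegral.integral_mono_on hcb intervalIntegrable_const hint₂ fun x hx =>
      hg ⟨hac, hcb⟩ ⟨hac.trans hx.1, hx.2⟩ hx.1
  rw [intervalIntegral.integral_const, smul_eq_mul] at hright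
  rw [← intervalIntegral.integral_add_adjacent_intervals hint₁ hint₂]
  linarith

theorem exists_pos_le_one_rpow_le {ε r : ℝ} (hε : 0 < ε) (hr : 0 < r) :
    ∃ θ : ℝ, 0 < θ ∧ θ ≤ 1 ∧ θ ^ r ≤ ε := by
  refine ⟨min 1 ε ^ r⁻¹, by positivity,
    Real.rpow_le_one (by positivity) (min_le_left _ _) (by positivity), ?_⟩
  rw [← Real.rpow_mul (by positivity), inv_mul_cancel₀ hr.ne', Real.rpow_one]
  exact min_le_right _ _

noncomputable def phiShiftDeriv (p a t : ℝ) : ℝ :=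
  (a + t) ^ (p - 2) * t

section

variable {p a : ℝ}

theorem phiShiftDeriv_nonneg (ha : 0 ≤ a) {t : ℝ} (ht : 0 ≤ t) : 0 ≤ phiShiftDeriv p a t := by
  unfold phiShiftDeriv
  positivity

theorem phiShiftDeriv_mul_le (ha : 0 ≤ a) {θ s : ℝ} (hθ0 : 0 ≤ θ) (hθ1 : θ ≤ 1)
    (hs : 0 ≤ s) : phiShiftDeriv p a (θ * s) ≤ θ ^ min (p - 1) 1 * phiShiftDeriv p a s := by
  rcases (mul_nonneg hθ0 hs).eq_or_lt with hθs | hθs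
  · rw [← hθs, phiShiftDeriv, mul_zero]
    exact mul_nonneg (Real.rpow_nonneg hθ0 _) (phiShiftDeriv_nonneg ha hs)
  have hθ : 0 < θ := pos_of_mul_pos_left hθs hs
  have hs : 0 < s := pos_of_mul_pos_right hθs hθ0
  unfold phiShiftDeriv
  rcases le_total 2 p with h2 | h2
  · have hbase : (a + θ * s) ^ (p - 2) ≤ (a + s) ^ (p - 2) :=
      Real.rpow_le_rpow (by positivity) (by nlinarith) (by linarith)
    rw [min_eq_right (by linarith), Real.rpow_one]
    calc (a + θ * s) ^ (p - 2) * (θ * s) ≤ (a + s) ^ (p - 2) * (θ * s) := by gcongr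
      _ = θ * ((a + s) ^ (p - 2) * s) := by ring
  · have hbase : (a + θ * s) ^ (p - 2) ≤ (θ * (a + s)) ^ (p - 2) :=
      Real.rpow_le_rpow_of_nonpos (by positivity) (by nlinarith) (by linarith)
    rw [Real.mul_rpow hθ.le (by positivity)] at hbase
    rw [min_eq_left (by linarith)]
    calc (a + θ * s) ^ (p - 2) * (θ * s) ≤ θ ^ (p - 2) * (a + s) ^ (p - 2) * (θ * s) := by gcongr
      _ = θ ^ (p - 2 + 1) * ((a + s) ^ (p - 2) * s) := by rw [Real.rpow_add_one hθ.ne']; ring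
      _ = θ ^ (p - 1) * ((a + s) ^ (p - 2) * s) := by ring_nf

theorem rpow_mul_phiShiftDeriv_le (ha : 0 ≤ a) {θ s : ℝ} (hθ0 : 0 < θ) (hθ1 : θ ≤ 1)
    (hs : 0 ≤ s) : θ ^ max (p - 1) 1 * phiShiftDeriv p a s ≤ phiShiftDeriv p a (θ * s) := by
  rcases hs.eq_or_lt with rfl | hs
  · simp [phiShiftDeriv]
  unfold phiShiftDeriv
  rcases le_total 2 p with h2 | h2
  · have hbase : (θ * (a + s)) ^ (p - 2) ≤ (a + θ * s) ^ (p - 2) :=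
      Real.rpow_le_rpow (by positivity) (by nlinarith) (by linarith)
    rw [Real.mul_rpow hθ0.le (by positivity)] at hbase
    rw [max_eq_left (by linarith)]
    calc θ ^ (p - 1) * ((a + s) ^ (p - 2) * s)
        = θ ^ (p - 2 + 1) * ((a + s) ^ (p - 2) * s) := by ring_nf
      _ = θ ^ (p - 2) * (a + s) ^ (p - 2) * (θ * s) := by rw [Real.rpow_add_one hθ0.ne']; ring
      _ ≤ (a + θ * s) ^ (p - 2) * (θ * s) := by gcongr
  · have hbase : (a + s) ^ (p - 2) ≤ (a + θ * s) ^ (p - 2) :=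
      Real.rpow_le_rpow_of_nonpos (by positivity) (by nlinarith) (by linarith)
    rw [max_eq_right (by linarith), Real.rpow_one]
    calc θ * ((a + s) ^ (p - 2) * s) = (a + s) ^ (p - 2) * (θ * s) := by ring
      _ ≤ (a + θ * s) ^ (p - 2) * (θ * s) := by gcongr

theorem phiShiftDeriv_monotoneOn (hp : 1 < p) (ha : 0 ≤ a) :
    MonotoneOn (phiShiftDeriv p a) (Ici 0) := by
  intro x (hx : 0 ≤ x) y (hy : 0 ≤ y) hxy
  rcases hy.eq_or_lt with rfl | hy
  · rw [le_antisymm hxy hx]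
  have hθ0 : 0 ≤ x / y := div_nonneg hx hy.le
  have hθ1 : x / y ≤ 1 := (div_le_one hy).mpr hxy
  calc phiShiftDeriv p a x = phiShiftDeriv p a (x / y * y) := by rw [div_mul_cancel₀ x hy.ne']
    _ ≤ (x / y) ^ min (p - 1) 1 * phiShiftDeriv p a y := phiShiftDeriv_mul_le ha hθ0 hθ1 hy.le
    _ ≤ phiShiftDeriv p a y :=
      mul_le_of_le_one_left (phiShiftDeriv_nonneg ha hy.le)
        (Real.rpow_le_one hθ0 hθ1 (by positivity))

theorem phiShift_nonneg (ha : 0 ≤ a) {t : ℝ} (ht : 0 ≤ t) : 0 ≤ phiShift p a t :=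
  intervalIntegral.integral_nonneg ht fun _ hs => phiShiftDeriv_nonneg ha hs.1

theorem mul_phiShiftDeriv_le_phiShift (hp : 1 < p) (ha : 0 ≤ a) {t : ℝ} (ht : 0 ≤ t) :
    t * phiShiftDeriv p a t ≤ 2 ^ (max (p - 1) 1 + 1) * phiShift p a t := by
  have hhalf : (t - t / 2) * phiShiftDeriv p a (t / 2) ≤ phiShift p a t :=
    ((phiShiftDeriv_monotoneOn hp ha).mono Icc_subset_Ici_self).sub_mul_le_intervalIntegral
      (by linarith) (by linarith) (by simp [phiShiftDeriv])
  have hscale : (2 ^ max (p - 1) 1)⁻¹ * phiShiftDeriv p a t ≤ phiShiftDeriv p a (t / 2) := by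
    simpa [Real.inv_rpow, div_eq_inv_mul] using
      rpow_mul_phiShiftDeriv_le ha (inv_pos.2 two_pos) (inv_le_one_of_one_le₀ one_le_two) ht
  calc t * phiShiftDeriv p a t
      = 2 ^ max (p - 1) 1 * 2 * ((t - t / 2) * ((2 ^ max (p - 1) 1)⁻¹ * phiShiftDeriv p a t)) := by
        field_simp; ring
    _ ≤ 2 ^ max (p - 1) 1 * 2 * ((t - t / 2) * phiShiftDeriv p a (t / 2)) := by
        gcongr; linarith
    _ ≤ 2 ^ (max (p - 1) 1 + 1) * phiShift p a t := by
        rw [Real.rpow_add_one two_ne_zero]; gcongr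

theorem phiShiftDeriv_young_of_le_mul (hp : 1 < p) (ha : 0 ≤ a) {θ s t : ℝ} (hθ0 : 0 ≤ θ)
    (hθ1 : θ ≤ 1) (hs : 0 ≤ s) (ht : 0 ≤ t) (hts : t ≤ θ * s) :
    phiShiftDeriv p a s * t + phiShiftDeriv p a t * s ≤
      2 * θ ^ min (p - 1) 1 * (s * phiShiftDeriv p a s) := by
  have hs' := phiShiftDeriv_nonneg (p := p) ha hs
  have hθr : θ ≤ θ ^ min (p - 1) 1 := Real.self_le_rpow_of_le_one hθ0 hθ1 (min_le_right _ _)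
  have h₁ : phiShiftDeriv p a s * t ≤ θ ^ min (p - 1) 1 * (s * phiShiftDeriv p a s) :=
    calc phiShiftDeriv p a s * t ≤ phiShiftDeriv p a s * (θ * s) := by gcongr
      _ = θ * (s * phiShiftDeriv p a s) := by ring
      _ ≤ θ ^ min (p - 1) 1 * (s * phiShiftDeriv p a s) := by gcongr
  have h₂ : phiShiftDeriv p a t * s ≤ θ ^ min (p - 1) 1 * (s * phiShiftDeriv p a s) :=
    calc phiShiftDeriv p a t * s ≤ phiShiftDeriv p a (θ * s) * s := by
          gcongr
          exact phiShiftDeriv_monotoneOn hp ha ht (mul_nonneg hθ0 hs) hts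
      _ ≤ θ ^ min (p - 1) 1 * phiShiftDeriv p a s * s := by
          gcongr
          exact phiShiftDeriv_mul_le ha hθ0 hθ1 hs
      _ = θ ^ min (p - 1) 1 * (s * phiShiftDeriv p a s) := by ring
  linarith

theorem phiShiftDeriv_young_of_mul_le (hp : 1 < p) (ha : 0 ≤ a) {θ s t : ℝ} (hθ0 : 0 < θ)
    (hθ1 : θ ≤ 1) (hs : 0 ≤ s) (hst : θ * s ≤ t) :
    θ ^ max (p - 1) 1 * (phiShiftDeriv p a s * t + phiShiftDeriv p a t * s) ≤
      2 * (t * phiShiftDeriv p a t) := by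
  have ht : 0 ≤ t := (mul_nonneg hθ0.le hs).trans hst
  have ht' := phiShiftDeriv_nonneg (p := p) ha ht
  have h₁ : θ ^ max (p - 1) 1 * phiShiftDeriv p a s ≤ phiShiftDeriv p a t :=
    (rpow_mul_phiShiftDeriv_le ha hθ0 hθ1 hs).trans
      (phiShiftDeriv_monotoneOn hp ha (mul_nonneg hθ0.le hs) ht hst)
  have h₂ : θ ^ max (p - 1) 1 * s ≤ t :=
    calc θ ^ max (p - 1) 1 * s ≤ θ * s := by
          gcongr
          exact Real.rpow_le_self_of_le_one hθ0.le hθ1 (le_max_right _ _)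
      _ ≤ t := hst
  calc θ ^ max (p - 1) 1 * (phiShiftDeriv p a s * t + phiShiftDeriv p a t * s)
      = θ ^ max (p - 1) 1 * phiShiftDeriv p a s * t +
          θ ^ max (p - 1) 1 * s * phiShiftDeriv p a t := by ring
    _ ≤ phiShiftDeriv p a t * t + t * phiShiftDeriv p a t := by gcongr
    _ = 2 * (t * phiShiftDeriv p a t) := by ring

end

/-- Generalized Young inequality for shifted N-functions:
`φ_a'(s) t + φ_a'(t) s ≤ δ φ_a(s) + c(δ) φ_a(t)`, where `φ_a'(t) = (a+t)^{p-2} t`. -/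
theorem shifted_N_function_generalized_Young (p : ℝ) (hp1 : 1 < p)
    (δ : ℝ) (hδ : 0 < δ) :
    ∃ c : ℝ, 0 < c ∧
      ∀ a s t : ℝ, 0 ≤ a → 0 ≤ s → 0 ≤ t →
        (a + s) ^ (p - 2) * s * t + (a + t) ^ (p - 2) * t * s ≤
          δ * phiShift p a s + c * phiShift p a t := by
  set K : ℝ := 2 ^ (max (p - 1) 1 + 1)
  obtain ⟨θ, hθ0, hθ1, hθr⟩ :=
    exists_pos_le_one_rpow_le (ε := δ / (2 * K)) (r := min (p - 1) 1) (by positivity)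
      (lt_min (by linarith) one_pos)
  have hθrK : 2 * θ ^ min (p - 1) 1 * K ≤ δ := by
    rw [le_div_iff₀ (by positivity)] at hθr
    linarith
  refine ⟨2 * K / θ ^ max (p - 1) 1, by positivity, fun a s t ha hs ht => ?_⟩
  have hφs := phiShift_nonneg (p := p) ha hs
  have hφt := phiShift_nonneg (p := p) ha ht
  have hKs := mul_phiShiftDeriv_le_phiShift hp1 ha hs
  have hKt := mul_phiShiftDeriv_le_phiShift hp1 ha ht
  show phiShiftDeriv p a s * t + phiShiftDeriv p a t * s ≤ _
  rcases le_total t (θ * s) with hts | hst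
  · calc _ ≤ 2 * θ ^ min (p - 1) 1 * (s * phiShiftDeriv p a s) :=
          phiShiftDeriv_young_of_le_mul hp1 ha hθ0.le hθ1 hs ht hts
      _ ≤ 2 * θ ^ min (p - 1) 1 * (K * phiShift p a s) := by gcongr
      _ ≤ δ * phiShift p a s := by rw [← mul_assoc]; gcongr
      _ ≤ _ := le_add_of_nonneg_right (by positivity)
  · calc _ ≤ 2 * (t * phiShiftDeriv p a t) / θ ^ max (p - 1) 1 := by
          rw [le_div_iff₀ (by positivity), mul_comm]
          exact phiShiftDeriv_young_of_mul_le hp1 ha hθ0 hθ1 hs hst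
      _ ≤ 2 * (K * phiShift p a t) / θ ^ max (p - 1) 1 := by gcongr
      _ = 2 * K / θ ^ max (p - 1) 1 * phiShift p a t := by ring
      _ ≤ _ := le_add_of_nonneg_left (by positivity)
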